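/- Within one epoch of local GD with γ ≤ 1/(4LH), the epoch sum of variances satisfies Σ_{t=t_p}^{t_{p+1}−1} V_t ≤ 5Lγ²H² Σ_{i=t_p}^{t_{p+1}−1} (f(x̂_i) − f(x_*)) + 8γ²H²σ² · (t_{p+1} − t_p). -/

import Mathlib

open Finset RealInnerProductSpace

/-- Average of vectors. -/
noncomputable def avgV {d M : ℕ} (x : Fin M → EuclideanSpace ℝ (Fin d)) :
    EuclideanSpace ℝ (Fin d) := (1 / (M : ℝ)) • ∑ m, x m

/-- Average of reals. -/
noncomputable def avgR {M : ℕ} (a : Fin M → ℝ) : ℝ := (1 / (M : ℝ)) * ∑ m, a m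

/-! Unrolling the local steps from the common point `x̂_{t_p}`, each variance `V_t` is at most
`γ²H` times the epoch sum of the mean squared local gradients. Splitting
`∇f_m(x_m) = (∇f_m(x_m) - ∇f_m(x̂)) + (∇f_m(x̂) - ∇f_m(x_*)) + ∇f_m(x_*)` with weights `3, 2, 6`,
smoothness and co-coercivity bound each of these by `3L²V_i + 4L(f(x̂_i) - f(x_*)) + 6σ²`,
because the local gradients at the minimiser average to zero. As `3L²γ²H² ≤ 3/16 < 1/5`, the
variance term on the right is absorbed by the left-hand side. -/

lemma norm_add_add_sq_le {F : Type*} [SeminormedAddCommGroup F] (a b c : F) :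
    ‖a + b + c‖ ^ 2 ≤ 3 * ‖a‖ ^ 2 + 2 * ‖b‖ ^ 2 + 6 * ‖c‖ ^ 2 := by
  have h := norm_add₃_le (a := a) (b := b) (c := c)
  -- Cauchy–Schwarz with the weights `1/3 + 1/2 + 1/6 = 1`
  nlinarith [norm_nonneg (a + b + c), sq_nonneg (3 * ‖a‖ - 2 * ‖b‖),
    sq_nonneg (‖a‖ - 2 * ‖c‖), sq_nonneg (‖b‖ - 3 * ‖c‖)]

section Bregman

variable {F : Type*} [NormedAddCommGroup F] [InnerProductSpace ℝ F]

noncomputable def bregman (f : F → ℝ) (g : F → F) (x y : F) : ℝ := f x - f y - ⟪g y, x - y⟫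

variable {L : ℝ} {f : F → ℝ} {g : F → F}

/-- Co-coercivity: compare `f` at `z = a - L⁻¹ (g a - g b)` with its lower bound from `b` and its
upper bound from `a`. -/
lemma norm_sub_sq_le_two_mul_bregman (hL : 0 < L)
    (hsc : ∀ x y, 0 ≤ bregman f g x y ∧ bregman f g x y ≤ L / 2 * ‖x - y‖ ^ 2) (a b : F) :
    ‖g a - g b‖ ^ 2 ≤ 2 * L * bregman f g a b := by
  set D := g a - g b
  have hlow := (hsc (a - L⁻¹ • D) b).1
  have hup := (hsc (a - L⁻¹ • D) a).2
  simp only [bregman, sub_sub_cancel_left, sub_right_comm _ _ b, inner_neg_right,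
    inner_sub_right, real_inner_smul_right, norm_neg, norm_smul, Real.norm_eq_abs,
    abs_inv, abs_of_pos hL] at hlow hup
  have hD : L⁻¹ * ⟪g a, D⟫ - L⁻¹ * ⟪g b, D⟫ = L⁻¹ * ‖D‖ ^ 2 := by
    rw [← mul_sub, ← inner_sub_left, real_inner_self_eq_norm_sq]
  have key : L⁻¹ * ‖D‖ ^ 2 / 2 ≤ bregman f g a b := by
    have : L / 2 * (L⁻¹ * ‖D‖) ^ 2 = L⁻¹ * ‖D‖ ^ 2 / 2 := by field_simp
    rw [bregman, inner_sub_right]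
    linarith
  calc ‖D‖ ^ 2 = 2 * L * (L⁻¹ * ‖D‖ ^ 2 / 2) := by field_simp
    _ ≤ 2 * L * bregman f g a b := by gcongr

lemma norm_sub_sq_le_sq_mul_norm_sub_sq (hL : 0 < L)
    (hsc : ∀ x y, 0 ≤ bregman f g x y ∧ bregman f g x y ≤ L / 2 * ‖x - y‖ ^ 2) (a b : F) :
    ‖g a - g b‖ ^ 2 ≤ L ^ 2 * ‖a - b‖ ^ 2 :=
  calc ‖g a - g b‖ ^ 2 ≤ 2 * L * bregman f g a b := norm_sub_sq_le_two_mul_bregman hL hsc a b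
    _ ≤ 2 * L * (L / 2 * ‖a - b‖ ^ 2) := by gcongr; exact (hsc a b).2
    _ = L ^ 2 * ‖a - b‖ ^ 2 := by ring

lemma eq_zero_of_isMin_of_le_add_inner {φ : F → ℝ} {x₀ G : F} {C : ℝ}
    (hmin : ∀ y, φ x₀ ≤ φ y) (hup : ∀ y, φ y ≤ φ x₀ + ⟪G, y - x₀⟫ + C * ‖y - x₀‖ ^ 2) :
    G = 0 := by
  set t := (|C| + 1)⁻¹
  have ht : 0 < t := by positivity
  have hCt : 0 < 1 - C * t := by
    have : (|C| + 1) * t = 1 := mul_inv_cancel₀ (by positivity)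
    nlinarith [le_abs_self C]
  have hy := (hmin (x₀ - t • G)).trans (hup (x₀ - t • G))
  simp only [sub_sub_cancel_left, inner_neg_right, real_inner_smul_right,
    real_inner_self_eq_norm_sq, norm_neg, norm_smul, Real.norm_of_nonneg ht.le] at hy
  have : ‖G‖ ^ 2 ≤ 0 := by nlinarith [mul_pos ht hCt, sq_nonneg ‖G‖]
  exact norm_eq_zero.mp (pow_eq_zero_iff two_ne_zero |>.mp (le_antisymm this (sq_nonneg _)))

end Bregman

lemma norm_sum_sq_le_card_mul {ι F : Type*} [SeminormedAddCommGroup F] (s : Finset ι)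
    (v : ι → F) : ‖∑ i ∈ s, v i‖ ^ 2 ≤ #s * ∑ i ∈ s, ‖v i‖ ^ 2 :=
  (pow_le_pow_left₀ (norm_nonneg _) (norm_sum_le _ _) 2).trans sq_sum_le_card_mul_sum_sq

lemma eq_sub_sum_Ico_of_sub {E : Type*} [AddCommGroup E] {y u : ℕ → E} {a b t : ℕ}
    (hstep : ∀ i, a ≤ i → i + 1 < b → y (i + 1) = y i - u i) (hat : a ≤ t) (htb : t < b) :
    y t = y a - ∑ i ∈ Ico a t, u i := by
  have htel : y t - y a = ∑ i ∈ Ico a t, -u i := by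
    rw [← sum_Ico_sub y hat]
    refine sum_congr rfl fun i hi => ?_
    rw [mem_Ico] at hi
    rw [hstep i hi.1 (by omega), sub_sub_cancel_left]
  rw [sum_neg_distrib, sub_eq_iff_eq_add'] at htel
  rw [htel, sub_eq_add_neg]

section Average

variable {d M : ℕ}

lemma avgR_add (a b : Fin M → ℝ) : avgR (fun m => a m + b m) = avgR a + avgR b := by
  simp only [avgR, sum_add_distrib, mul_add]

lemma avgR_sub (a b : Fin M → ℝ) : avgR (fun m => a m - b m) = avgR a - avgR b := by
  simp only [avgR, sum_sub_distrib, mul_sub]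

lemma avgR_const_mul (c : ℝ) (a : Fin M → ℝ) : avgR (fun m => c * a m) = c * avgR a := by
  simp only [avgR, ← mul_sum]
  ring

lemma avgR_const (hM : M ≠ 0) (c : ℝ) : avgR (fun _ : Fin M => c) = c := by
  simp [avgR, hM]

lemma avgR_le_avgR {a b : Fin M → ℝ} (h : ∀ m, a m ≤ b m) : avgR a ≤ avgR b :=
  mul_le_mul_of_nonneg_left (sum_le_sum fun m _ => h m) (by positivity)

lemma avgR_nonneg {a : Fin M → ℝ} (h : ∀ m, 0 ≤ a m) : 0 ≤ avgR a :=
  mul_nonneg (by positivity) (sum_nonneg fun m _ => h m)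

lemma sum_avgR {ι : Type*} (s : Finset ι) (a : ι → Fin M → ℝ) :
    ∑ i ∈ s, avgR (a i) = avgR (fun m => ∑ i ∈ s, a i m) := by
  simp only [avgR, mul_sum]
  exact sum_comm

lemma avgR_inner (v : Fin M → EuclideanSpace ℝ (Fin d)) (w : EuclideanSpace ℝ (Fin d)) :
    avgR (fun m => ⟪v m, w⟫) = ⟪avgV v, w⟫ := by
  simp only [avgR, avgV, real_inner_smul_left, sum_inner]

lemma avgV_sub_avgV (y : Fin M → EuclideanSpace ℝ (Fin d)) :
    avgV (fun m => y m - avgV y) = 0 := by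
  simp only [avgV, sum_sub_distrib, sum_const, card_univ, Fintype.card_fin, smul_sub,
    ← Nat.cast_smul_eq_nsmul ℝ, smul_smul]
  field_simp
  exact sub_self _

lemma avgR_norm_sub_avgV_sq_le (hM : M ≠ 0) (y : Fin M → EuclideanSpace ℝ (Fin d))
    (c : EuclideanSpace ℝ (Fin d)) :
    avgR (fun m => ‖y m - avgV y‖ ^ 2) ≤ avgR (fun m => ‖y m - c‖ ^ 2) := by
  have hsplit : ∀ m, ‖y m - c‖ ^ 2 =
      ‖y m - avgV y‖ ^ 2 + 2 * ⟪y m - avgV y, avgV y - c⟫ + ‖avgV y - c‖ ^ 2 := by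
    intro m
    rw [← norm_add_sq_real, sub_add_sub_cancel]
  simp only [hsplit, avgR_add, avgR_const_mul, avgR_inner, avgV_sub_avgV, inner_zero_left,
    avgR_const hM]
  linarith [sq_nonneg ‖avgV y - c‖]

end Average

section LocalGD

variable {d M : ℕ} {L : ℝ} {f : Fin M → EuclideanSpace ℝ (Fin d) → ℝ}
  {g : Fin M → EuclideanSpace ℝ (Fin d) → EuclideanSpace ℝ (Fin d)}

lemma avgR_bregman (y z : EuclideanSpace ℝ (Fin d)) :
    avgR (fun m => bregman (f m) (g m) y z) =
      avgR (fun m => f m y) - avgR (fun m => f m z) - ⟪avgV (fun m => g m z), y - z⟫ := by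
  simp only [bregman, avgR_sub, avgR_inner]

lemma avgV_eq_zero_of_isMin (hM : M ≠ 0)
    (hsmooth : ∀ m x y, bregman (f m) (g m) x y ≤ L / 2 * ‖x - y‖ ^ 2)
    {xstar : EuclideanSpace ℝ (Fin d)}
    (hmin : ∀ y, avgR (fun m => f m xstar) ≤ avgR (fun m => f m y)) :
    avgV (fun m => g m xstar) = 0 := by
  refine eq_zero_of_isMin_of_le_add_inner (φ := fun y => avgR fun m => f m y) (C := L / 2) hmin
    fun y => ?_
  have := avgR_le_avgR fun m => hsmooth m y xstar
  rw [avgR_bregman, avgR_const hM] at this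
  linarith

lemma avgR_norm_grad_sq_le (hL : 0 < L)
    (hsc : ∀ m x y,
      0 ≤ bregman (f m) (g m) x y ∧ bregman (f m) (g m) x y ≤ L / 2 * ‖x - y‖ ^ 2)
    {xstar : EuclideanSpace ℝ (Fin d)} (hgrad : avgV (fun m => g m xstar) = 0)
    (y : Fin M → EuclideanSpace ℝ (Fin d)) :
    avgR (fun m => ‖g m (y m)‖ ^ 2) ≤
      3 * L ^ 2 * avgR (fun m => ‖y m - avgV y‖ ^ 2)
        + 4 * L * (avgR (fun m => f m (avgV y)) - avgR (fun m => f m xstar))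
        + 6 * avgR (fun m => ‖g m xstar‖ ^ 2) := by
  have hpoint : ∀ m, ‖g m (y m)‖ ^ 2 ≤ 3 * L ^ 2 * ‖y m - avgV y‖ ^ 2
      + 4 * L * bregman (f m) (g m) (avgV y) xstar + 6 * ‖g m xstar‖ ^ 2 := by
    intro m
    calc ‖g m (y m)‖ ^ 2
        = ‖(g m (y m) - g m (avgV y)) + (g m (avgV y) - g m xstar) + g m xstar‖ ^ 2 := by
          rw [sub_add_sub_cancel, sub_add_cancel]
      _ ≤ 3 * ‖g m (y m) - g m (avgV y)‖ ^ 2 + 2 * ‖g m (avgV y) - g m xstar‖ ^ 2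
          + 6 * ‖g m xstar‖ ^ 2 := norm_add_add_sq_le _ _ _
      _ ≤ 3 * (L ^ 2 * ‖y m - avgV y‖ ^ 2)
          + 2 * (2 * L * bregman (f m) (g m) (avgV y) xstar) + 6 * ‖g m xstar‖ ^ 2 := by
          gcongr
          · exact norm_sub_sq_le_sq_mul_norm_sub_sq hL (hsc m) _ _
          · exact norm_sub_sq_le_two_mul_bregman hL (hsc m) _ _
      _ = _ := by ring
  have := avgR_le_avgR hpoint
  simpa only [avgR_add, avgR_const_mul, avgR_bregman, hgrad, inner_zero_left, sub_zero]
    using this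

variable {γ : ℝ} {x : ℕ → Fin M → EuclideanSpace ℝ (Fin d)} {tp tp1 : ℕ}

lemma variance_le_sum_Ico (hM : M ≠ 0) (hstart : ∀ m, x tp m = avgV (x tp))
    (hstep : ∀ t m, tp ≤ t → t + 1 < tp1 → x (t + 1) m = x t m - γ • g m (x t m))
    {t : ℕ} (htp : tp ≤ t) (htp1 : t < tp1) :
    avgR (fun m => ‖x t m - avgV (x t)‖ ^ 2) ≤
      γ ^ 2 * (t - tp : ℕ) * ∑ i ∈ Ico tp t, avgR (fun m => ‖g m (x i m)‖ ^ 2) := by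
  have hdrift : ∀ m, x t m - avgV (x tp) = -(γ • ∑ i ∈ Ico tp t, g m (x i m)) := by
    intro m
    have h := eq_sub_sum_Ico_of_sub (y := fun s => x s m) (u := fun i => γ • g m (x i m))
      (fun i => hstep i m) htp htp1
    rw [h, hstart, ← smul_sum]
    abel
  calc avgR (fun m => ‖x t m - avgV (x t)‖ ^ 2)
      ≤ avgR (fun m => ‖x t m - avgV (x tp)‖ ^ 2) := avgR_norm_sub_avgV_sq_le hM _ _
    _ = avgR (fun m => γ ^ 2 * ‖∑ i ∈ Ico tp t, g m (x i m)‖ ^ 2) := by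
        simp only [hdrift, norm_neg, norm_smul, mul_pow, Real.norm_eq_abs, sq_abs]
    _ ≤ avgR (fun m => γ ^ 2 * ((t - tp : ℕ) * ∑ i ∈ Ico tp t, ‖g m (x i m)‖ ^ 2)) := by
        refine avgR_le_avgR fun m => ?_
        rw [← Nat.card_Ico]
        gcongr
        exact norm_sum_sq_le_card_mul _ _
    _ = _ := by
        simp only [avgR_const_mul, sum_avgR]
        ring

lemma sum_variance_le (hM : M ≠ 0) {H : ℕ} (hH : tp1 - tp ≤ H)
    (hstart : ∀ m, x tp m = avgV (x tp))
    (hstep : ∀ t m, tp ≤ t → t + 1 < tp1 → x (t + 1) m = x t m - γ • g m (x t m)) :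
    ∑ t ∈ Ico tp tp1, avgR (fun m => ‖x t m - avgV (x t)‖ ^ 2) ≤
      γ ^ 2 * H ^ 2 * ∑ i ∈ Ico tp tp1, avgR (fun m => ‖g m (x i m)‖ ^ 2) := by
  have hnn : ∀ i, 0 ≤ avgR (fun m => ‖g m (x i m)‖ ^ 2) := fun i =>
    avgR_nonneg fun m => sq_nonneg _
  have hV : ∀ t ∈ Ico tp tp1, avgR (fun m => ‖x t m - avgV (x t)‖ ^ 2) ≤
      γ ^ 2 * H * ∑ i ∈ Ico tp tp1, avgR (fun m => ‖g m (x i m)‖ ^ 2) := by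
    intro t ht
    rw [mem_Ico] at ht
    refine (variance_le_sum_Ico hM hstart hstep ht.1 ht.2).trans ?_
    have hcard : ((t - tp : ℕ) : ℝ) ≤ H := by exact_mod_cast (by omega : t - tp ≤ H)
    gcongr
    · exact sum_nonneg fun i _ => hnn i
    · exact fun i _ _ => hnn i
    · exact ht.2.le
  calc _ ≤ ∑ t ∈ Ico tp tp1, γ ^ 2 * H * ∑ i ∈ Ico tp tp1, avgR (fun m => ‖g m (x i m)‖ ^ 2) :=
        sum_le_sum hV
    _ = (tp1 - tp : ℕ) * (γ ^ 2 * H * ∑ i ∈ Ico tp tp1, avgR (fun m => ‖g m (x i m)‖ ^ 2)) := by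
        rw [sum_const, Nat.card_Ico, nsmul_eq_mul]
    _ ≤ H * (γ ^ 2 * H * ∑ i ∈ Ico tp tp1, avgR (fun m => ‖g m (x i m)‖ ^ 2)) := by
        gcongr
        exact mul_nonneg (by positivity) (sum_nonneg fun i _ => hnn i)
    _ = _ := by ring

end LocalGD

theorem epoch_variance_sum_bound_general {d M : ℕ} (hM : 0 < M) (L γ : ℝ)
    (hL : 0 < L)
    (f : Fin M → EuclideanSpace ℝ (Fin d) → ℝ)
    (g : Fin M → EuclideanSpace ℝ (Fin d) → EuclideanSpace ℝ (Fin d))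
    (hsc : ∀ m x y, 0 ≤ f m x - f m y - ⟪g m y, x - y⟫ ∧
      f m x - f m y - ⟪g m y, x - y⟫ ≤ L / 2 * ‖x - y‖ ^ 2)
    (xstar : EuclideanSpace ℝ (Fin d))
    (hmin : ∀ y, avgR (fun m => f m xstar) ≤ avgR (fun m => f m y))
    (x : ℕ → Fin M → EuclideanSpace ℝ (Fin d))
    (tp tp1 H : ℕ) (hH1 : 1 ≤ H) (hH : tp1 - tp ≤ H)
    (hγ0 : 0 < γ) (hγ : γ ≤ 1 / (4 * L * H))
    (hstart : ∀ m, x tp m = avgV (x tp))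
    (hstep : ∀ t m, tp ≤ t → t + 1 < tp1 →
      x (t + 1) m = x t m - γ • g m (x t m)) :
    ∑ t ∈ Finset.Ico tp tp1, avgR (fun m => ‖x t m - avgV (x t)‖ ^ 2) ≤
      5 * L * γ ^ 2 * H ^ 2 *
        ∑ i ∈ Finset.Ico tp tp1,
          (avgR (fun m => f m (avgV (x i))) - avgR (fun m => f m xstar))
      + 8 * γ ^ 2 * H ^ 2 * avgR (fun m => ‖g m xstar‖ ^ 2) *
          ((tp1 - tp : ℕ) : ℝ) := by
  have hgrad := avgV_eq_zero_of_isMin hM.ne' (fun m x y => (hsc m x y).2) hmin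
  have hV := sum_variance_le hM.ne' hH hstart hstep
  have hG : ∑ i ∈ Ico tp tp1, avgR (fun m => ‖g m (x i m)‖ ^ 2) ≤
      3 * L ^ 2 * ∑ t ∈ Ico tp tp1, avgR (fun m => ‖x t m - avgV (x t)‖ ^ 2)
        + 4 * L * ∑ i ∈ Ico tp tp1,
          (avgR (fun m => f m (avgV (x i))) - avgR (fun m => f m xstar))
        + 6 * avgR (fun m => ‖g m xstar‖ ^ 2) * ((tp1 - tp : ℕ) : ℝ) := by
    refine (sum_le_sum fun i _ => avgR_norm_grad_sq_le hL hsc hgrad (x i)).trans_eq ?_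
    rw [sum_add_distrib, sum_add_distrib, ← mul_sum, ← mul_sum, sum_const, Nat.card_Ico,
      nsmul_eq_mul]
    ring
  have hγLH : (γ * L * H) ^ 2 ≤ (1 / 4) ^ 2 := by
    have hHpos : (0 : ℝ) < H := Nat.cast_pos.mpr hH1
    rw [le_div_iff₀ (by positivity)] at hγ
    exact pow_le_pow_left₀ (by positivity) (by linarith) 2
  have hVnn : 0 ≤ ∑ t ∈ Ico tp tp1, avgR (fun m => ‖x t m - avgV (x t)‖ ^ 2) :=
    sum_nonneg fun t _ => avgR_nonneg fun m => sq_nonneg _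
  have hσnn : 0 ≤ avgR (fun m => ‖g m xstar‖ ^ 2) * ((tp1 - tp : ℕ) : ℝ) :=
    mul_nonneg (avgR_nonneg fun m => sq_nonneg _) (Nat.cast_nonneg _)
  linarith [mul_le_mul_of_nonneg_right hγLH hVnn, hV,
    mul_le_mul_of_nonneg_left hG (by positivity : (0 : ℝ) ≤ γ ^ 2 * H ^ 2),
    mul_nonneg (by positivity : (0 : ℝ) ≤ γ ^ 2 * H ^ 2) hσnn]

/-- Lemma 2, first part: Within one epoch of local GD with
`0 < γ ≤ 1/(4LH)`:
`∑_{t=t_p}^{t_{p+1}−1} V_t ≤ 5Lγ²H² ∑_{i=t_p}^{t_{p+1}−1} (f(x̂_i) − f(x⋆))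
  + 8γ²H²σ² (t_{p+1} − t_p)`. -/
theorem epoch_variance_sum_bound {d M : ℕ} (hM : 0 < M) (L γ : ℝ)
    (hL : 0 < L)
    (f : Fin M → EuclideanSpace ℝ (Fin d) → ℝ)
    (g : Fin M → EuclideanSpace ℝ (Fin d) → EuclideanSpace ℝ (Fin d))
    (hsc : ∀ m x y, 0 ≤ f m x - f m y - ⟪g m y, x - y⟫ ∧
      f m x - f m y - ⟪g m y, x - y⟫ ≤ L / 2 * ‖x - y‖ ^ 2)
    (xstar : EuclideanSpace ℝ (Fin d))
    (hmin : ∀ y, avgR (fun m => f m xstar) ≤ avgR (fun m => f m y))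
    (x : ℕ → Fin M → EuclideanSpace ℝ (Fin d))
    (tp tp1 H : ℕ) (htp : tp < tp1) (hH1 : 1 ≤ H) (hH : tp1 - tp ≤ H)
    (hγ0 : 0 < γ) (hγ : γ ≤ 1 / (4 * L * H))
    (hstart : ∀ m, x tp m = avgV (x tp))
    (hstep : ∀ t m, tp ≤ t → t + 1 < tp1 →
      x (t + 1) m = x t m - γ • g m (x t m)) :
    ∑ t ∈ Finset.Ico tp tp1, avgR (fun m => ‖x t m - avgV (x t)‖ ^ 2) ≤
      5 * L * γ ^ 2 * H ^ 2 *
        ∑ i ∈ Finset.Ico tp tp1,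
          (avgR (fun m => f m (avgV (x i))) - avgR (fun m => f m xstar))
      + 8 * γ ^ 2 * H ^ 2 * avgR (fun m => ‖g m xstar‖ ^ 2) *
          ((tp1 - tp : ℕ) : ℝ) :=
  epoch_variance_sum_bound_general hM L γ hL f g hsc xstar hmin x tp tp1 H hH1 hH hγ0 hγ hstart
    hstep
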